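/- For the quadratic MSE objective J(F) = tr(F* A F) − 2 Re tr(F* B) with A Hermitian positive definite, subject to ‖F‖_F² ≤ ρ: if ‖A^{-1}B‖_F² ≤ ρ then F = A^{-1}B is the global minimizer; otherwise the minimizer is F = (A + μI)^{-1}B where μ > 0 is the unique value satisfying ‖(A+μI)^{-1}B‖_F² = ρ. -/

import Mathlib

open Matrix
open scoped ComplexOrder

/-- Squared Frobenius norm of a complex matrix. -/
noncomputable def frobSq {m n : ℕ} (A : Matrix (Fin m) (Fin n) ℂ) : ℝ :=
  ∑ i, ∑ j, Complex.normSq (A i j)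

/-!
Completing the square for `A + μ I` (Hermitian and invertible, `F_μ := (A + μ I)⁻¹ B`) gives
`J(F) = J(F_μ) + Re tr((F - F_μ)ᴴ (A + μ I) (F - F_μ)) + μ (‖F_μ‖² - ‖F‖²)`,
so `F_μ` minimizes `J` over the ball of radius `‖F_μ‖`; for `μ = 0` this is the unconstrained
minimizer. The map `μ ↦ ‖F_μ‖²` is continuous on `[0, ∞)` and bounded by `‖B‖² / μ²`, which gives
a multiplier `μ > 0` with `‖F_μ‖² = ρ` by the intermediate value theorem. Applying the identity
with two such multipliers in both directions forces `F_μ₁ = F_μ₂`, hence `μ₁ = μ₂`.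
-/

lemma Matrix.PosSemidef.posDef_add_real_smul_one {m : Type*} [DecidableEq m] {A : Matrix m m ℂ}
    (hA : A.PosSemidef) {μ : ℝ} (hμ : 0 < μ) : (A + (μ : ℂ) • 1).PosDef :=
  PosDef.posSemidef_add hA (PosDef.one.smul (Complex.zero_lt_real.2 hμ))

section Quadratic

variable {m n : Type*} [Fintype m] [Fintype n]

lemma re_trace_conjTranspose_mul_mul_nonneg {M : Matrix m m ℂ} (hM : M.PosSemidef)
    (G : Matrix m n ℂ) : 0 ≤ ((Gᴴ * M * G).trace).re :=
  (Complex.nonneg_iff.1 (hM.conjTranspose_mul_mul_same G).trace_nonneg).1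

lemma re_trace_conjTranspose_mul_comm (X Y : Matrix m n ℂ) :
    ((Yᴴ * X).trace).re = ((Xᴴ * Y).trace).re := by
  rw [← conjTranspose_conjTranspose X, ← conjTranspose_mul, trace_conjTranspose,
    conjTranspose_conjTranspose]
  exact Complex.conj_re _

noncomputable def mseObjective (A : Matrix m m ℂ) (B F : Matrix m n ℂ) : ℝ :=
  ((Fᴴ * A * F).trace).re - 2 * ((Fᴴ * B).trace).re

lemma mseObjective_eq_inv_mul_add [DecidableEq m] {M : Matrix m m ℂ} (hM : M.IsHermitian)
    (hMu : IsUnit M) (B F : Matrix m n ℂ) :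
    mseObjective M B F = mseObjective M B (M⁻¹ * B)
      + (((F - M⁻¹ * B)ᴴ * M * (F - M⁻¹ * B)).trace).re := by
  set F₀ := M⁻¹ * B
  have hMF₀ : M * F₀ = B := mul_nonsing_inv_cancel_left M B ((isUnit_iff_isUnit_det M).1 hMu)
  have hF₀M : F₀ᴴ * M = Bᴴ := by
    rw [← hM.eq, ← conjTranspose_mul, hMF₀]
  have hexpand : (F - F₀)ᴴ * M * (F - F₀) = Fᴴ * M * F - Fᴴ * B - (Bᴴ * F - Bᴴ * F₀) := by
    rw [conjTranspose_sub, Matrix.sub_mul, Matrix.sub_mul, Matrix.mul_sub, Matrix.mul_sub, hF₀M,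
      Matrix.mul_assoc Fᴴ M F₀, hMF₀]
  have hF₀ : ((F₀ᴴ * M * F₀).trace).re = ((F₀ᴴ * B).trace).re := by
    rw [Matrix.mul_assoc, hMF₀]
  simp only [mseObjective, hexpand, trace_sub, Complex.sub_re, hF₀,
    re_trace_conjTranspose_mul_comm _ B]
  ring

end Quadratic

section Frobenius

variable {m n : ℕ}

lemma frobSq_nonneg (F : Matrix (Fin m) (Fin n) ℂ) : 0 ≤ frobSq F :=
  Finset.sum_nonneg fun _ _ => Finset.sum_nonneg fun _ _ => Complex.normSq_nonneg _

lemma frobSq_eq_zero_iff {F : Matrix (Fin m) (Fin n) ℂ} : frobSq F = 0 ↔ F = 0 := by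
  have hrow (i : Fin m) : 0 ≤ ∑ j, Complex.normSq (F i j) :=
    Finset.sum_nonneg fun j _ => Complex.normSq_nonneg _
  simp [frobSq, Finset.sum_eq_zero_iff_of_nonneg, hrow, Complex.normSq_nonneg, ← Matrix.ext_iff]

lemma frobSq_eq_re_trace (F : Matrix (Fin m) (Fin n) ℂ) : frobSq F = ((Fᴴ * F).trace).re := by
  simp only [frobSq, trace, diag, mul_apply, conjTranspose_apply, Complex.re_sum,
    RCLike.star_def, Complex.conj_mul', ← Complex.ofReal_pow, Complex.ofReal_re,
    ← Complex.normSq_eq_norm_sq]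
  exact Finset.sum_comm

lemma continuous_frobSq : Continuous (frobSq : Matrix (Fin m) (Fin n) ℂ → ℝ) := by
  unfold frobSq
  fun_prop

lemma re_trace_conjTranspose_mul_add_smul_one_mul (A : Matrix (Fin m) (Fin m) ℂ) (μ : ℝ)
    (G : Matrix (Fin m) (Fin n) ℂ) :
    ((Gᴴ * (A + (μ : ℂ) • 1) * G).trace).re = ((Gᴴ * A * G).trace).re + μ * frobSq G := by
  simp [Matrix.mul_add, Matrix.add_mul, frobSq_eq_re_trace]

lemma mseObjective_add_smul_one (A : Matrix (Fin m) (Fin m) ℂ) (B F : Matrix (Fin m) (Fin n) ℂ)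
    (μ : ℝ) : mseObjective (A + (μ : ℂ) • 1) B F = mseObjective A B F + μ * frobSq F := by
  simp only [mseObjective, re_trace_conjTranspose_mul_add_smul_one_mul]
  ring

end Frobenius

section Tikhonov

variable {m n : ℕ} {A : Matrix (Fin m) (Fin m) ℂ} (B : Matrix (Fin m) (Fin n) ℂ)

noncomputable def tikhonov (A : Matrix (Fin m) (Fin m) ℂ) (B : Matrix (Fin m) (Fin n) ℂ) (μ : ℝ) :
    Matrix (Fin m) (Fin n) ℂ :=
  (A + (μ : ℂ) • 1)⁻¹ * B

lemma tikhonov_zero : tikhonov A B 0 = A⁻¹ * B := by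
  simp [tikhonov]

lemma mul_tikhonov {μ : ℝ} (hM : IsUnit (A + (μ : ℂ) • 1)) :
    (A + (μ : ℂ) • 1) * tikhonov A B μ = B :=
  mul_nonsing_inv_cancel_left _ B ((isUnit_iff_isUnit_det _).1 hM)

lemma mseObjective_eq_tikhonov_add (hA : A.IsHermitian) {μ : ℝ}
    (hM : IsUnit (A + (μ : ℂ) • 1)) (F : Matrix (Fin m) (Fin n) ℂ) :
    mseObjective A B F = mseObjective A B (tikhonov A B μ)
      + (((F - tikhonov A B μ)ᴴ * (A + (μ : ℂ) • 1) * (F - tikhonov A B μ)).trace).re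
      + μ * (frobSq (tikhonov A B μ) - frobSq F) := by
  have := mseObjective_eq_inv_mul_add
    (hA.add (isHermitian_one.smul (Complex.conj_ofReal μ))) hM B F
  rw [mseObjective_add_smul_one, mseObjective_add_smul_one] at this
  rw [tikhonov]
  linarith

lemma mseObjective_tikhonov_le (hA : A.PosSemidef) {μ : ℝ} (hμ : 0 < μ)
    {F : Matrix (Fin m) (Fin n) ℂ} (hF : frobSq F ≤ frobSq (tikhonov A B μ)) :
    mseObjective A B (tikhonov A B μ) ≤ mseObjective A B F := by
  have hM := hA.posDef_add_real_smul_one hμ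
  rw [mseObjective_eq_tikhonov_add B hA.isHermitian hM.isUnit F]
  have := re_trace_conjTranspose_mul_mul_nonneg hM.posSemidef (F - tikhonov A B μ)
  have := mul_nonneg hμ.le (sub_nonneg.2 hF)
  linarith

lemma tikhonov_eq_of_frobSq_eq (hA : A.PosSemidef) {μ₁ μ₂ : ℝ} (hμ₁ : 0 < μ₁) (hμ₂ : 0 < μ₂)
    (h : frobSq (tikhonov A B μ₁) = frobSq (tikhonov A B μ₂)) :
    tikhonov A B μ₁ = tikhonov A B μ₂ := by
  have h₁ := mseObjective_eq_tikhonov_add B hA.isHermitian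
    (hA.posDef_add_real_smul_one hμ₁).isUnit (tikhonov A B μ₂)
  have h₂ := mseObjective_eq_tikhonov_add B hA.isHermitian
    (hA.posDef_add_real_smul_one hμ₂).isUnit (tikhonov A B μ₁)
  set F₁ := tikhonov A B μ₁
  set F₂ := tikhonov A B μ₂
  rw [re_trace_conjTranspose_mul_add_smul_one_mul] at h₁ h₂
  have hQ₁ := re_trace_conjTranspose_mul_mul_nonneg hA (F₂ - F₁)
  have hQ₂ := re_trace_conjTranspose_mul_mul_nonneg hA (F₁ - F₂)
  have hN₁ := mul_nonneg hμ₁.le (frobSq_nonneg (F₂ - F₁))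
  have hN₂ : 0 ≤ frobSq (F₁ - F₂) := frobSq_nonneg _
  have hzero : frobSq (F₁ - F₂) = 0 := by nlinarith
  exact sub_eq_zero.1 (frobSq_eq_zero_iff.1 hzero)

lemma eq_of_tikhonov_eq {μ₁ μ₂ : ℝ} (hM₁ : IsUnit (A + (μ₁ : ℂ) • 1))
    (hM₂ : IsUnit (A + (μ₂ : ℂ) • 1)) (h : tikhonov A B μ₁ = tikhonov A B μ₂)
    (hne : tikhonov A B μ₁ ≠ 0) : μ₁ = μ₂ := by
  have hdiff : ((μ₁ - μ₂ : ℝ) : ℂ) • tikhonov A B μ₁ = 0 := by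
    have := (mul_tikhonov B hM₁).trans (mul_tikhonov B hM₂).symm
    rw [← h, ← sub_eq_zero, ← Matrix.sub_mul, add_sub_add_left_eq_sub, ← sub_smul,
      Matrix.smul_mul, Matrix.one_mul] at this
    exact_mod_cast this
  simpa [sub_eq_zero, hne] using hdiff

lemma frobSq_tikhonov_le (hA : A.PosSemidef) {μ : ℝ} (hμ : 0 < μ) :
    frobSq (tikhonov A B μ) ≤ frobSq B / μ ^ 2 := by
  set X := tikhonov A B μ
  have hsq : (A + (μ : ℂ) • 1)ᴴ * (A + (μ : ℂ) • 1)
      = (A * A + ((2 * μ : ℝ) : ℂ) • A) + ((μ ^ 2 : ℝ) : ℂ) • 1 := by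
    rw [conjTranspose_add, hA.isHermitian.eq, conjTranspose_smul, conjTranspose_one,
      RCLike.star_def, Complex.conj_ofReal]
    simp only [Matrix.add_mul, Matrix.mul_add, Matrix.smul_mul, Matrix.mul_smul, Matrix.one_mul,
      Matrix.mul_one]
    push_cast
    module
  have hB : frobSq B
      = ((Xᴴ * (A * A + ((2 * μ : ℝ) : ℂ) • A) * X).trace).re + μ ^ 2 * frobSq X := by
    rw [← re_trace_conjTranspose_mul_add_smul_one_mul, ← hsq, frobSq_eq_re_trace,
      ← mul_tikhonov B (hA.posDef_add_real_smul_one hμ).isUnit]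
    simp only [conjTranspose_mul, Matrix.mul_assoc]
    rfl
  have hpsd : (A * A + ((2 * μ : ℝ) : ℂ) • A).PosSemidef := by
    refine PosSemidef.add ?_ (hA.smul (Complex.zero_le_real.2 (by positivity)))
    simpa only [hA.isHermitian.eq] using posSemidef_conjTranspose_mul_self A
  rw [le_div_iff₀ (by positivity)]
  nlinarith [re_trace_conjTranspose_mul_mul_nonneg hpsd X]

lemma continuousAt_tikhonov {μ : ℝ} (hM : IsUnit (A + (μ : ℂ) • 1)) :
    ContinuousAt (tikhonov A B) μ := by
  have hinv : ContinuousAt Inv.inv (A + (μ : ℂ) • 1) :=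
    continuousAt_matrix_inv _ <| by
      rw [Ring.inverse_eq_inv']
      exact continuousAt_inv₀ ((isUnit_iff_isUnit_det _).1 hM).ne_zero
  exact (continuous_id.matrix_mul continuous_const).continuousAt.comp
    (ContinuousAt.comp (f := fun t : ℝ => A + (t : ℂ) • 1) hinv (by fun_prop))

lemma exists_frobSq_tikhonov_eq (hA : A.PosDef) {ρ : ℝ} (hρ : 0 < ρ)
    (h : ρ < frobSq (A⁻¹ * B)) : ∃ μ, 0 < μ ∧ frobSq (tikhonov A B μ) = ρ := by
  obtain ⟨μ₀, hμ₀ρ, hμ₀⟩ : ∃ μ₀, frobSq B / μ₀ ^ 2 < ρ ∧ 0 < μ₀ :=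
    (((tendsto_const_nhds.div_atTop (Filter.tendsto_pow_atTop two_ne_zero)).eventually
      (gt_mem_nhds hρ)).and (Filter.eventually_gt_atTop 0)).exists
  have hM (μ : ℝ) (hμ : 0 ≤ μ) : IsUnit (A + (μ : ℂ) • 1) := by
    rcases hμ.lt_or_eq with hμ | rfl
    · exact (hA.posSemidef.posDef_add_real_smul_one hμ).isUnit
    · simpa using hA.isUnit
  have hcont : ContinuousOn (fun μ => frobSq (tikhonov A B μ)) (Set.Icc 0 μ₀) := fun μ hμ =>
    (continuous_frobSq.continuousAt.comp
      (continuousAt_tikhonov B (hM μ hμ.1))).continuousWithinAt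
  rw [← tikhonov_zero B] at h
  obtain ⟨μ, hμ, hμρ⟩ := intermediate_value_Icc' hμ₀.le hcont
    ⟨((frobSq_tikhonov_le B hA.posSemidef hμ₀).trans_lt hμ₀ρ).le, h.le⟩
  refine ⟨μ, hμ.1.lt_of_ne ?_, hμρ⟩
  rintro rfl
  exact h.ne' hμρ

lemma existsUnique_frobSq_tikhonov_eq (hA : A.PosDef) {ρ : ℝ} (hρ : 0 < ρ)
    (h : ρ < frobSq (A⁻¹ * B)) : ∃! μ, 0 < μ ∧ frobSq (tikhonov A B μ) = ρ := by
  obtain ⟨μ, hμ, hμρ⟩ := exists_frobSq_tikhonov_eq B hA hρ h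
  refine ⟨μ, ⟨hμ, hμρ⟩, fun ν ⟨hν, hνρ⟩ => ?_⟩
  have hM (t : ℝ) (ht : 0 < t) := (hA.posSemidef.posDef_add_real_smul_one ht).isUnit
  have heq := tikhonov_eq_of_frobSq_eq B hA.posSemidef hν hμ (hνρ.trans hμρ.symm)
  refine eq_of_tikhonov_eq B (hM ν hν) (hM μ hμ) heq fun h0 => hρ.ne ?_
  rw [← hνρ, h0, frobSq_eq_zero_iff.2 rfl]

end Tikhonov

/-- Minimizing `J(F) = tr(F* A F) − 2 Re tr(F* B)` subject to `‖F‖_F² ≤ ρ`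
(`A` Hermitian positive definite): if `‖A⁻¹B‖_F² ≤ ρ` then `F = A⁻¹B` is the
global minimizer; otherwise the minimizer is `F = (A + μI)⁻¹B` for the unique
`μ > 0` with `‖(A+μI)⁻¹B‖_F² = ρ`. -/
theorem mmse_precoder_power_constraint (MM S : ℕ)
    (A : Matrix (Fin MM) (Fin MM) ℂ) (hA : A.PosDef)
    (B : Matrix (Fin MM) (Fin S) ℂ) (ρ : ℝ) (hρ : 0 < ρ) :
    letI J : Matrix (Fin MM) (Fin S) ℂ → ℝ := fun F =>
      ((Fᴴ * A * F).trace).re - 2 * ((Fᴴ * B).trace).re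
    (frobSq (A⁻¹ * B) ≤ ρ →
      ∀ F, frobSq F ≤ ρ → J (A⁻¹ * B) ≤ J F) ∧
    (ρ < frobSq (A⁻¹ * B) →
      (∃! μ : ℝ, 0 < μ ∧
        frobSq ((A + (μ : ℂ) • (1 : Matrix (Fin MM) (Fin MM) ℂ))⁻¹ * B) = ρ) ∧
      ∀ μ : ℝ, 0 < μ →
        frobSq ((A + (μ : ℂ) • (1 : Matrix (Fin MM) (Fin MM) ℂ))⁻¹ * B) = ρ →
        ∀ F, frobSq F ≤ ρ →
          J ((A + (μ : ℂ) • (1 : Matrix (Fin MM) (Fin MM) ℂ))⁻¹ * B) ≤ J F) := by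
  refine ⟨fun _ F _ => ?_, fun hρB => ⟨existsUnique_frobSq_tikhonov_eq B hA hρ hρB,
    fun μ hμ hμρ F hF => mseObjective_tikhonov_le B hA.posSemidef hμ (hμρ ▸ hF)⟩⟩
  change mseObjective A B (A⁻¹ * B) ≤ mseObjective A B F
  rw [mseObjective_eq_inv_mul_add hA.isHermitian hA.isUnit B F]
  exact le_add_of_nonneg_right (re_trace_conjTranspose_mul_mul_nonneg hA.posSemidef _)
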